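/- arXiv:0711.0928 — 3 statements merged into one kernel-verified Lean document; each statement's English description precedes it below -/
import Mathlib

section
/- Theorem (Theorem 2, case 2). Suppose p_aa < p_ba (equivalently p_bb < p_ab). If p_ba ≥ p_ab, then almost surely with respect to the law of (X_i)_{i≥1}, the set {u ≥ 1 : X_u is a strong a-node of the realization (X_1,…,X_u)} is infinite. Symmetrically, if p_ab ≥ p_ba, then almost every realization has infinitely many strong b-nodes. -/
/-!
For `p_aa < p_ba`, time `u` is a strong `a`-node as soon as `δ_u(b) p_ba < δ_u(a) p_aa`.
Fix `r > 1` such that both `{r f_a < f_b}` and `{r f_b < f_a}` have positive emission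
probability (possible because `P_a ≠ P_b`). Along a block of observations alternately favouring
`b` and `a` by the factor `r` and containing no strong `a`-node, the Viterbi ratio `δ(a)/δ(b)`
drops by `r²` every two steps yet stays above `r p_aa / p_ab` (this uses `p_ab ≤ p_ba`), so such
blocks are short. Whatever the past, the hidden chain produces a long block of this kind with
probability at least some `c > 0`, so `N` consecutive blocks all fail with probability at most
`(1 - c)^N`, and the block recurs almost surely. The strong `b`-nodes are handled by exchanging
the two hidden states.
-/

open MeasureTheory

namespace TwoStateHMM

/-- Parameters of a two-state hidden Markov model: strictly positive transition
probabilities `paa, pab, pba, pbb` with row sums one, the (unique) stationary initial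
distribution `(pia, pib)`, and emission densities `fa, fb` with respect to a σ-finite
measure `lam` on `ℝ^d`, such that the emission distributions differ. -/
structure HMMParams (d : ℕ) where
  paa : ℝ
  pab : ℝ
  pba : ℝ
  pbb : ℝ
  pia : ℝ
  pib : ℝ
  fa : (Fin d → ℝ) → ℝ
  fb : (Fin d → ℝ) → ℝ
  lam : Measure (Fin d → ℝ)
  paa_pos : 0 < paa
  pab_pos : 0 < pab
  pba_pos : 0 < pba
  pbb_pos : 0 < pbb
  rowa : paa + pab = 1
  rowb : pba + pbb = 1
  pia_pos : 0 < pia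
  pib_pos : 0 < pib
  pi_sum : pia + pib = 1
  pi_stat : pia = pia * paa + pib * pba
  fa_nonneg : ∀ x, 0 ≤ fa x
  fb_nonneg : ∀ x, 0 ≤ fb x
  fa_meas : Measurable fa
  fb_meas : Measurable fb
  lam_sigmaFinite : SigmaFinite lam
  fa_int : ∫ x, fa x ∂lam = 1
  fb_int : ∫ x, fb x ∂lam = 1
  emis_ne : 0 < lam {x | fa x ≠ fb x}

variable {d : ℕ}

/-- Viterbi scores: `delta P x u = (δ_{u+1}(a), δ_{u+1}(b))` of the sequence
`x_1 = x 0, x_2 = x 1, …` (0-indexed time `u` corresponds to the `(u+1)`-th observation). -/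
noncomputable def delta (P : HMMParams d) (x : ℕ → (Fin d → ℝ)) : ℕ → ℝ × ℝ
  | 0 => (P.pia * P.fa (x 0), P.pib * P.fb (x 0))
  | u + 1 =>
      (max ((delta P x u).1 * P.paa) ((delta P x u).2 * P.pba) * P.fa (x (u + 1)),
       max ((delta P x u).1 * P.pab) ((delta P x u).2 * P.pbb) * P.fb (x (u + 1)))

/-- `x u` (the `(u+1)`-th observation) is a strong `a`-node:
`δ(a)·p_aa > δ(b)·p_ba` and `δ(a)·p_ab > δ(b)·p_bb`. -/
def StrongANode (P : HMMParams d) (x : ℕ → (Fin d → ℝ)) (u : ℕ) : Prop :=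
  (delta P x u).2 * P.pba < (delta P x u).1 * P.paa ∧
  (delta P x u).2 * P.pbb < (delta P x u).1 * P.pab

/-- Strong `b`-node. -/
def StrongBNode (P : HMMParams d) (x : ℕ → (Fin d → ℝ)) (u : ℕ) : Prop :=
  (delta P x u).1 * P.paa < (delta P x u).2 * P.pba ∧
  (delta P x u).1 * P.pab < (delta P x u).2 * P.pbb

/-- Strong node: strong `a`-node or strong `b`-node. -/
def StrongNode (P : HMMParams d) (x : ℕ → (Fin d → ℝ)) (u : ℕ) : Prop :=
  StrongANode P x u ∨ StrongBNode P x u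

/-- Weak (not necessarily strong) `a`-node. -/
def WeakANode (P : HMMParams d) (x : ℕ → (Fin d → ℝ)) (u : ℕ) : Prop :=
  (delta P x u).2 * P.pba ≤ (delta P x u).1 * P.paa ∧
  (delta P x u).2 * P.pbb ≤ (delta P x u).1 * P.pab

/-- Weak (not necessarily strong) `b`-node. -/
def WeakBNode (P : HMMParams d) (x : ℕ → (Fin d → ℝ)) (u : ℕ) : Prop :=
  (delta P x u).1 * P.paa ≤ (delta P x u).2 * P.pba ∧
  (delta P x u).1 * P.pab ≤ (delta P x u).2 * P.pbb

/-- Weak node: weak `a`-node or weak `b`-node. -/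
def WeakNode (P : HMMParams d) (x : ℕ → (Fin d → ℝ)) (u : ℕ) : Prop :=
  WeakANode P x u ∨ WeakBNode P x u

/-- The sequence obtained by appending the block `z` after the first `m` elements of `x`. -/
def concatSeq (m : ℕ) (x z : ℕ → (Fin d → ℝ)) : ℕ → (Fin d → ℝ) :=
  fun i => if i < m then x i else z (i - m)

/-- The block `z 0, …, z (k-1)` is a strong barrier: appended to any prefix, it
contains a strong node. -/
def IsStrongBarrier (P : HMMParams d) (k : ℕ) (z : ℕ → (Fin d → ℝ)) : Prop :=
  ∀ (m : ℕ) (x : ℕ → (Fin d → ℝ)),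
    ∃ u, m ≤ u ∧ u < m + k ∧ StrongNode P (concatSeq m x z) u

/-- The block `z 0, …, z (k-1)` is a strong `a`-barrier. -/
def IsStrongABarrier (P : HMMParams d) (k : ℕ) (z : ℕ → (Fin d → ℝ)) : Prop :=
  ∀ (m : ℕ) (x : ℕ → (Fin d → ℝ)),
    ∃ u, m ≤ u ∧ u < m + k ∧ StrongANode P (concatSeq m x z) u

/-- The block `z 0, …, z (k-1)` is a strong `b`-barrier. -/
def IsStrongBBarrier (P : HMMParams d) (k : ℕ) (z : ℕ → (Fin d → ℝ)) : Prop :=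
  ∀ (m : ℕ) (x : ℕ → (Fin d → ℝ)),
    ∃ u, m ≤ u ∧ u < m + k ∧ StrongBNode P (concatSeq m x z) u

/-- Initial probabilities indexed by the hidden state (`true = a`, `false = b`). -/
def HMMParams.initP (P : HMMParams d) : Bool → ℝ := fun s => if s then P.pia else P.pib

/-- Transition probabilities indexed by the hidden states (`true = a`, `false = b`). -/
def HMMParams.transP (P : HMMParams d) : Bool → Bool → ℝ := fun s t =>
  if s then (if t then P.paa else P.pab) else (if t then P.pba else P.pbb)

/-- Emission densities indexed by the hidden state. -/
def HMMParams.dens (P : HMMParams d) : Bool → (Fin d → ℝ) → ℝ := fun s =>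
  if s then P.fa else P.fb

/-- Emission distributions `P_a = f_a·λ`, `P_b = f_b·λ`. -/
noncomputable def HMMParams.emis (P : HMMParams d) : Bool → Measure (Fin d → ℝ) := fun s =>
  P.lam.withDensity fun x => ENNReal.ofReal (P.dens s x)

/-- The likelihood `Λ_π(y_{1:n+1}; x_{1:n+1})` of the hidden path `y` of length `n+1`. -/
noncomputable def likelihood (P : HMMParams d) (n : ℕ) (y : Fin (n + 1) → Bool)
    (x : ℕ → (Fin d → ℝ)) : ℝ :=
  P.initP (y 0) * (∏ i : Fin n, P.transP (y i.castSucc) (y i.succ)) *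
    ∏ i : Fin (n + 1), P.dens (y i) (x i)

/-- `(Y, X)` is (a version of) the two-state HMM with parameters `P` on the probability
space `(Ω, μ)`: the finite-dimensional joint distributions are those of a stationary
Markov chain `Y` with the given transition probabilities, together with observations
`X` that are conditionally independent given `Y`, `X_i` having distribution `P_{Y_i}`. -/
def IsHMM (P : HMMParams d) {Ω : Type} [MeasurableSpace Ω] (μ : Measure Ω)
    (Y : ℕ → Ω → Bool) (X : ℕ → Ω → (Fin d → ℝ)) : Prop :=
  IsProbabilityMeasure μ ∧ (∀ i, Measurable (Y i)) ∧ (∀ i, Measurable (X i)) ∧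
  ∀ (n : ℕ) (y : Fin (n + 1) → Bool) (A : Fin (n + 1) → Set (Fin d → ℝ)),
    (∀ i, MeasurableSet (A i)) →
    μ {ω | ∀ i : Fin (n + 1), Y i ω = y i ∧ X i ω ∈ A i} =
      ENNReal.ofReal (P.initP (y 0) * ∏ i : Fin n, P.transP (y i.castSucc) (y i.succ)) *
        ∏ i : Fin (n + 1), P.emis (y i) (A i)

section Viterbi

variable (P : HMMParams d) (x : ℕ → Fin d → ℝ)

lemma delta_succ (u : ℕ) :
    delta P x (u + 1) =
      (max ((delta P x u).1 * P.paa) ((delta P x u).2 * P.pba) * P.fa (x (u + 1)),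
       max ((delta P x u).1 * P.pab) ((delta P x u).2 * P.pbb) * P.fb (x (u + 1))) := rfl

lemma delta_nonneg (u : ℕ) : 0 ≤ (delta P x u).1 ∧ 0 ≤ (delta P x u).2 := by
  induction u with
  | zero => exact ⟨mul_nonneg P.pia_pos.le (P.fa_nonneg _), mul_nonneg P.pib_pos.le (P.fb_nonneg _)⟩
  | succ u ih =>
    exact ⟨mul_nonneg (le_max_of_le_left (mul_nonneg ih.1 P.paa_pos.le)) (P.fa_nonneg _),
      mul_nonneg (le_max_of_le_left (mul_nonneg ih.1 P.pab_pos.le)) (P.fb_nonneg _)⟩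

lemma max_mul_pos {A B p q : ℝ} (hA : 0 ≤ A) (hAB : 0 < A + B) (hp : 0 < p) (hq : 0 < q) :
    0 < max (A * p) (B * q) := by
  rcases hA.lt_or_eq with hA | rfl
  · exact lt_max_of_lt_left (mul_pos hA hp)
  · exact lt_max_of_lt_right (mul_pos (by simpa using hAB) hq)

variable {x}

lemma delta_fst_add_snd_pos (hx : ∀ i, 0 < P.fa (x i) ∨ 0 < P.fb (x i)) (u : ℕ) :
    0 < (delta P x u).1 + (delta P x u).2 := by
  induction u with
  | zero =>
    rcases hx 0 with h | h
    · exact add_pos_of_pos_of_nonneg (mul_pos P.pia_pos h) (mul_nonneg P.pib_pos.le (P.fb_nonneg _))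
    · exact add_pos_of_nonneg_of_pos (mul_nonneg P.pia_pos.le (P.fa_nonneg _)) (mul_pos P.pib_pos h)
  | succ u ih =>
    have hA := (delta_nonneg P x u).1
    have ha := max_mul_pos hA ih P.paa_pos P.pba_pos
    have hb := max_mul_pos hA ih P.pab_pos P.pbb_pos
    rw [delta_succ]
    rcases hx (u + 1) with h | h
    · exact add_pos_of_pos_of_nonneg (mul_pos ha h) (mul_nonneg hb.le (P.fb_nonneg _))
    · exact add_pos_of_nonneg_of_pos (mul_nonneg ha.le (P.fa_nonneg _)) (mul_pos hb h)

/-- For `p_aa < p_ba` the second condition of a strong `a`-node follows from the first,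
because `p_bb · p_aa < p_ab · p_ba`. -/
lemma not_strongANode_iff (hc : P.paa < P.pba) (u : ℕ) :
    ¬ StrongANode P x u ↔ (delta P x u).1 * P.paa ≤ (delta P x u).2 * P.pba := by
  obtain ⟨hA, hB⟩ := delta_nonneg P x u
  rw [StrongANode, not_and_or, not_lt, not_lt]
  refine ⟨fun h => h.elim id fun h => ?_, Or.inl⟩
  by_contra! h'
  have hApos : 0 < (delta P x u).1 :=
    pos_of_mul_pos_left ((mul_nonneg hB P.pba_pos.le).trans_lt h') P.paa_pos.le
  have hcross : P.paa * P.pbb < P.pab * P.pba := by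
    have := P.rowa; have := P.rowb
    nlinarith [P.paa_pos, P.pbb_pos]
  nlinarith [mul_le_mul_of_nonneg_right h P.pba_pos.le, mul_lt_mul_of_pos_right h' P.pbb_pos,
    mul_lt_mul_of_pos_left hcross hApos]

lemma delta_snd_pos_of_not_strongANode (hx : ∀ i, 0 < P.fa (x i) ∨ 0 < P.fb (x i)) {u : ℕ}
    (hu : ¬ StrongANode P x u) : 0 < (delta P x u).2 := by
  refine (delta_nonneg P x u).2.lt_of_ne fun hB => hu ?_
  have hA : 0 < (delta P x u).1 := by linarith [delta_fst_add_snd_pos P hx u]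
  rw [StrongANode, ← hB, zero_mul, zero_mul]
  exact ⟨mul_pos hA P.paa_pos, mul_pos hA P.pab_pos⟩

lemma delta_succ_fst_of_not_strongANode (hc : P.paa < P.pba) {u : ℕ}
    (hu : ¬ StrongANode P x u) :
    (delta P x (u + 1)).1 = (delta P x u).2 * P.pba * P.fa (x (u + 1)) := by
  rw [delta_succ, max_eq_right ((not_strongANode_iff P hc u).1 hu)]

end Viterbi

section Block

variable (P : HMMParams d) {x : ℕ → Fin d → ℝ} (hc : P.paa < P.pba) (hab : P.pab ≤ P.pba)
  {r : ℝ} (hr : 1 < r) (hx : ∀ i, 0 < P.fa (x i) ∨ 0 < P.fb (x i))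
include hc hab hr hx

lemma delta_snd_mul_le_and_succ_snd_eq {u : ℕ} (hu : ¬ StrongANode P x u)
    (hv : ¬ StrongANode P x (u + 1)) (hfav : r * P.fb (x (u + 1)) ≤ P.fa (x (u + 1))) :
    (delta P x u).2 * (r * P.paa) ≤ (delta P x u).1 * P.pab ∧
      (delta P x (u + 1)).2 = (delta P x u).1 * P.pab * P.fb (x (u + 1)) := by
  obtain ⟨hA, hB⟩ := delta_nonneg P x u
  have hBpos := delta_snd_pos_of_not_strongANode P hx hu
  have hB₁pos := delta_snd_pos_of_not_strongANode P hx hv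
  have hv' := (not_strongANode_iff P hc (u + 1)).1 hv
  rw [delta_succ_fst_of_not_strongANode P hc hu] at hv'
  rw [delta_succ] at hB₁pos hv' ⊢
  set M := max ((delta P x u).1 * P.pab) ((delta P x u).2 * P.pbb)
  have hfb : 0 < P.fb (x (u + 1)) :=
    pos_of_mul_pos_right hB₁pos (le_max_of_le_left (mul_nonneg hA P.pab_pos.le))
  have hM : (delta P x u).2 * (r * P.paa) ≤ M := by
    refine le_of_mul_le_mul_right ?_ (mul_pos hfb P.pba_pos)
    calc (delta P x u).2 * (r * P.paa) * (P.fb (x (u + 1)) * P.pba)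
        = (delta P x u).2 * P.pba * P.paa * (r * P.fb (x (u + 1))) := by ring
      _ ≤ (delta P x u).2 * P.pba * P.paa * P.fa (x (u + 1)) :=
        mul_le_mul_of_nonneg_left hfav (by have := P.pba_pos; have := P.paa_pos; positivity)
      _ ≤ M * P.fb (x (u + 1)) * P.pba := by linarith
      _ = M * (P.fb (x (u + 1)) * P.pba) := by ring
  have hpbb : (delta P x u).2 * P.pbb < (delta P x u).2 * (r * P.paa) := by
    refine mul_lt_mul_of_pos_left ?_ hBpos
    have := P.rowa; have := P.rowb
    nlinarith [P.paa_pos]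
  have hmax : (delta P x u).2 * P.pbb ≤ (delta P x u).1 * P.pab := by
    by_contra! h
    rw [show M = _ from max_eq_right h.le] at hM
    linarith
  rw [show M = _ from max_eq_left hmax] at hM
  exact ⟨hM, by simp only [M, max_eq_left hmax]⟩

lemma delta_ratio_step {u : ℕ} (hu : ¬ StrongANode P x u) (hv : ¬ StrongANode P x (u + 1))
    (hfav_a : r * P.fb (x (u + 1)) ≤ P.fa (x (u + 1)))
    (hfav_b : r * P.fa (x (u + 2)) ≤ P.fb (x (u + 2))) :
    (delta P x (u + 2)).1 * r ^ 2 * (delta P x u).2 ≤ (delta P x u).1 * (delta P x (u + 2)).2 := by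
  obtain ⟨hA, hB⟩ := delta_nonneg P x u
  have hB₁ := (delta_snd_mul_le_and_succ_snd_eq P hc hab hr hx hu hv hfav_a).2
  have hA₂ := delta_succ_fst_of_not_strongANode P hc hv
  have hB₂ : (delta P x (u + 1)).1 * P.pab * P.fb (x (u + 2)) ≤ (delta P x (u + 2)).2 :=
    mul_le_mul_of_nonneg_right (le_max_left _ _) (P.fb_nonneg _)
  rw [delta_succ_fst_of_not_strongANode P hc hu] at hB₂
  have hfav : r * P.fb (x (u + 1)) * (r * P.fa (x (u + 2))) ≤
      P.fa (x (u + 1)) * P.fb (x (u + 2)) :=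
    mul_le_mul hfav_a hfav_b (by nlinarith [P.fa_nonneg (x (u + 2))]) (P.fa_nonneg _)
  have hcoef : 0 ≤ (delta P x u).1 * P.pab * P.pba * (delta P x u).2 := by
    have := P.pab_pos; have := P.pba_pos; positivity
  calc (delta P x (u + 2)).1 * r ^ 2 * (delta P x u).2
      = (delta P x u).1 * P.pab * P.pba * (delta P x u).2 *
          (r * P.fb (x (u + 1)) * (r * P.fa (x (u + 2)))) := by
        rw [hA₂, hB₁]; ring
    _ ≤ (delta P x u).1 * P.pab * P.pba * (delta P x u).2 *
          (P.fa (x (u + 1)) * P.fb (x (u + 2))) := mul_le_mul_of_nonneg_left hfav hcoef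
    _ = (delta P x u).1 *
          ((delta P x u).2 * P.pba * P.fa (x (u + 1)) * P.pab * P.fb (x (u + 2))) := by ring
    _ ≤ (delta P x u).1 * (delta P x (u + 2)).2 := mul_le_mul_of_nonneg_left hB₂ hA

lemma pow_mul_paa_sq_le_of_forall_not_strongANode {m k : ℕ}
    (hfav_a : ∀ j ≤ k, r * P.fb (x (m + 2 * j + 1)) ≤ P.fa (x (m + 2 * j + 1)))
    (hfav_b : ∀ j ≤ k, r * P.fa (x (m + 2 * j)) ≤ P.fb (x (m + 2 * j)))
    (hnode : ∀ u, m ≤ u → u < m + 2 * k + 2 → ¬ StrongANode P x u) :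
    r ^ (2 * k + 1) * P.paa ^ 2 ≤ P.pba * P.pab := by
  set ρ : ℕ → ℝ := fun j => (delta P x (m + 2 * j)).1 / (delta P x (m + 2 * j)).2
  have hn : ∀ j ≤ k, ¬ StrongANode P x (m + 2 * j) ∧ ¬ StrongANode P x (m + 2 * j + 1) :=
    fun j hj => ⟨hnode _ (by omega) (by omega), hnode _ (by omega) (by omega)⟩
  have hB : ∀ j ≤ k, 0 < (delta P x (m + 2 * j)).2 :=
    fun j hj => delta_snd_pos_of_not_strongANode P hx (hn j hj).1
  have step : ∀ j < k, ρ (j + 1) * r ^ 2 ≤ ρ j := by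
    intro j hj
    have h := delta_ratio_step P hc hab hr hx (hn j hj.le).1 (hn j hj.le).2 (hfav_a j hj.le)
      (hfav_b (j + 1) hj)
    rw [show m + 2 * j + 2 = m + 2 * (j + 1) by ring] at h
    rw [div_mul_eq_mul_div, div_le_div_iff₀ (hB (j + 1) hj) (hB j hj.le)]
    exact h
  have geom : ∀ j ≤ k, ρ j * r ^ (2 * j) ≤ ρ 0 := by
    intro j
    induction j with
    | zero => simp
    | succ j ih =>
      intro hj
      calc ρ (j + 1) * r ^ (2 * (j + 1)) = ρ (j + 1) * r ^ 2 * r ^ (2 * j) := by ring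
        _ ≤ ρ j * r ^ (2 * j) :=
          mul_le_mul_of_nonneg_right (step j hj) (pow_nonneg (by linarith) _)
        _ ≤ ρ 0 := ih (by omega)
  have start : ρ 0 * P.paa ≤ P.pba := by
    rw [div_mul_eq_mul_div, div_le_iff₀ (hB 0 (Nat.zero_le k)), mul_comm P.pba]
    exact (not_strongANode_iff P hc _).1 (hn 0 (Nat.zero_le k)).1
  have last : r * P.paa ≤ ρ k * P.pab := by
    rw [div_mul_eq_mul_div, le_div_iff₀ (hB k le_rfl), mul_comm]
    exact (delta_snd_mul_le_and_succ_snd_eq P hc hab hr hx (hn k le_rfl).1 (hn k le_rfl).2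
      (hfav_a k le_rfl)).1
  have hpow : 0 ≤ r ^ (2 * k) := pow_nonneg (by linarith) _
  calc r ^ (2 * k + 1) * P.paa ^ 2 = r ^ (2 * k) * (r * P.paa) * P.paa := by ring
    _ ≤ r ^ (2 * k) * (ρ k * P.pab) * P.paa :=
      mul_le_mul_of_nonneg_right (mul_le_mul_of_nonneg_left last hpow) P.paa_pos.le
    _ = ρ k * r ^ (2 * k) * P.paa * P.pab := by ring
    _ ≤ ρ 0 * P.paa * P.pab :=
      mul_le_mul_of_nonneg_right (mul_le_mul_of_nonneg_right (geom k le_rfl) P.paa_pos.le)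
        P.pab_pos.le
    _ ≤ P.pba * P.pab := mul_le_mul_of_nonneg_right start P.pab_pos.le

end Block

section Emission

open Filter Topology

lemma measure_lt_pos_of_integral_eq {α : Type*} [MeasurableSpace α] {ν : Measure α}
    {f g : α → ℝ} (hf : Integrable f ν) (hg : Integrable g ν) (heq : ∫ x, f x ∂ν = ∫ x, g x ∂ν)
    (hne : 0 < ν {x | f x ≠ g x}) : 0 < ν {x | f x < g x} := by
  refine pos_iff_ne_zero.2 fun hnull => hne.ne' ?_
  have hle : g ≤ᵐ[ν] f := by simpa only [Filter.EventuallyLE, ae_iff, not_le] using hnull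
  have := (integral_eq_iff_of_ae_le hg hf hle).1 heq.symm
  simpa only [Filter.EventuallyEq, ae_iff, ne_comm] using this

lemma exists_one_lt_measure_mul_lt_pos {α : Type*} [MeasurableSpace α] {ν : Measure α}
    {f g : α → ℝ} (h : 0 < ν {x | f x < g x}) : ∃ r, 1 < r ∧ 0 < ν {x | r * f x < g x} := by
  by_contra! hnull
  refine h.ne' (measure_mono_null (t := ⋃ n : ℕ, {x | (1 + 1 / ((n : ℝ) + 1)) * f x < g x})
    (fun x hx => ?_) (measure_iUnion_null fun n => nonpos_iff_eq_zero.1 (hnull _ ?_)))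
  · have hlim : Tendsto (fun n : ℕ => (1 + 1 / ((n : ℝ) + 1)) * f x) atTop (𝓝 (f x)) := by
      simpa using (tendsto_one_div_add_atTop_nhds_zero_nat.const_add 1).mul_const (f x)
    exact Set.mem_iUnion.2 (hlim.eventually (gt_mem_nhds hx)).exists
  · have : (0 : ℝ) < 1 / ((n : ℝ) + 1) := by positivity
    linarith

variable (P : HMMParams d)

lemma dens_nonneg (s : Bool) (x : Fin d → ℝ) : 0 ≤ P.dens s x := by
  cases s
  exacts [P.fb_nonneg x, P.fa_nonneg x]

lemma measurable_dens (s : Bool) : Measurable (P.dens s) := by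
  cases s
  exacts [P.fb_meas, P.fa_meas]

lemma emis_apply (s : Bool) {A : Set (Fin d → ℝ)} (hA : MeasurableSet A) :
    P.emis s A = ∫⁻ x in A, ENNReal.ofReal (P.dens s x) ∂P.lam :=
  withDensity_apply _ hA

lemma emis_eq_zero_of_dens_nonpos (s : Bool) {A : Set (Fin d → ℝ)} (hA : MeasurableSet A)
    (h : ∀ x ∈ A, P.dens s x ≤ 0) : P.emis s A = 0 := by
  rw [emis_apply P s hA, setLIntegral_congr_fun hA fun x hx => ENNReal.ofReal_eq_zero.2 (h x hx)]
  exact lintegral_zero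

lemma emis_pos_of_dens_pos (s : Bool) {A : Set (Fin d → ℝ)} (hA : MeasurableSet A)
    (hlam : 0 < P.lam A) (h : ∀ x ∈ A, 0 < P.dens s x) : 0 < P.emis s A := by
  rw [emis_apply P s hA, setLIntegral_pos_iff (measurable_dens P s).ennreal_ofReal]
  refine hlam.trans_le (measure_mono fun x hx => ⟨?_, hx⟩)
  exact (ENNReal.ofReal_pos.2 (h x hx)).ne'

def HMMParams.favSet (r : ℝ) (s : Bool) : Set (Fin d → ℝ) := {x | r * P.dens (!s) x < P.dens s x}

lemma measurableSet_favSet (r : ℝ) (s : Bool) : MeasurableSet (P.favSet r s) :=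
  measurableSet_lt ((measurable_dens P _).const_mul r) (measurable_dens P s)

lemma favSet_anti {r r' : ℝ} (h : r ≤ r') (s : Bool) : P.favSet r' s ⊆ P.favSet r s :=
  fun x hx => (mul_le_mul_of_nonneg_right h (dens_nonneg P _ x)).trans_lt hx

lemma exists_emis_favSet_pos : ∃ r, 1 < r ∧ ∀ s, 0 < P.emis s (P.favSet r s) := by
  have hint : ∀ s, Integrable (P.dens s) P.lam := fun s =>
    Integrable.of_integral_ne_zero (by cases s <;> simp [HMMParams.dens, P.fa_int, P.fb_int])
  have hlam : ∀ s, ∃ r, 1 < r ∧ 0 < P.lam (P.favSet r s) := fun s =>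
    exists_one_lt_measure_mul_lt_pos <| measure_lt_pos_of_integral_eq (hint (!s)) (hint s)
      (by cases s <;> simp [HMMParams.dens, P.fa_int, P.fb_int])
      (by cases s <;> simpa [HMMParams.dens, ne_comm] using P.emis_ne)
  obtain ⟨r₁, hr₁, h₁⟩ := hlam true
  obtain ⟨r₂, hr₂, h₂⟩ := hlam false
  have hr : 1 < min r₁ r₂ := lt_min hr₁ hr₂
  refine ⟨min r₁ r₂, hr, fun s => emis_pos_of_dens_pos P s (measurableSet_favSet P _ s) ?_
    fun x hx => (mul_nonneg (by linarith) (dens_nonneg P _ x)).trans_lt hx⟩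
  cases s
  · exact h₂.trans_le (measure_mono (favSet_anti P (min_le_right _ _) _))
  · exact h₁.trans_le (measure_mono (favSet_anti P (min_le_left _ _) _))

end Emission

section Cylinder

open scoped ENNReal

variable {Ω α : Type*}

def cylinder (X : ℕ → Ω → α) (n : ℕ) (C : ℕ → Set α) : Set Ω := {ω | ∀ i < n, X i ω ∈ C i}

def patternAt (X : ℕ → Ω → α) (S : ℕ → Set α) (L m : ℕ) : Set Ω :=
  {ω | ∀ i < L, X (m + i) ω ∈ S i}

lemma patternAt_succ {X : ℕ → Ω → α} (S : ℕ → Set α) (L m : ℕ) :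
    patternAt X S (L + 1) m = patternAt X S L m ∩ X (m + L) ⁻¹' S L := by
  ext ω
  simp only [patternAt, Set.mem_inter_iff, Set.mem_ofPred_eq, Set.mem_preimage,
    Nat.forall_lt_succ_right]

variable [MeasurableSpace α]

def IsCylinder (X : ℕ → Ω → α) (n : ℕ) (E : Set Ω) : Prop :=
  ∃ C : ℕ → Set α, (∀ i, MeasurableSet (C i)) ∧ E = cylinder X n C

variable {X : ℕ → Ω → α}

lemma isCylinder_univ (n : ℕ) : IsCylinder X n Set.univ :=
  ⟨fun _ => Set.univ, fun _ => MeasurableSet.univ, by ext; simp [cylinder]⟩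

lemma IsCylinder.inter_preimage {n : ℕ} {E : Set Ω} (hE : IsCylinder X n E) {A : Set α}
    (hA : MeasurableSet A) : IsCylinder X (n + 1) (E ∩ X n ⁻¹' A) := by
  obtain ⟨C, hC, rfl⟩ := hE
  refine ⟨Function.update C n A, fun i => ?_, ?_⟩
  · rcases eq_or_ne i n with rfl | h
    · simpa using hA
    · simpa [h] using hC i
  · ext ω
    simp only [cylinder, Set.mem_inter_iff, Set.mem_ofPred_eq, Set.mem_preimage,
      Nat.forall_lt_succ_right, Function.update_self]
    refine and_congr_left' (forall₂_congr fun i hi => ?_)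
    rw [Function.update_of_ne hi.ne]

lemma IsCylinder.mono {n m : ℕ} {E : Set Ω} (hE : IsCylinder X n E) (h : n ≤ m) :
    IsCylinder X m E := by
  induction m, h using Nat.le_induction with
  | base => exact hE
  | succ m _ ih => simpa using ih.inter_preimage MeasurableSet.univ

lemma IsCylinder.inter_patternAt {n : ℕ} {E : Set Ω} (hE : IsCylinder X n E)
    {S : ℕ → Set α} (hS : ∀ i, MeasurableSet (S i)) (L : ℕ) :
    IsCylinder X (n + L) (E ∩ patternAt X S L n) := by
  induction L with
  | zero => simpa [patternAt] using hE
  | succ L ih =>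
    rw [patternAt_succ, ← Set.inter_assoc]
    exact ih.inter_preimage (hS L)

variable [MeasurableSpace Ω]

lemma IsCylinder.measurableSet (hX : ∀ i, Measurable (X i)) {n : ℕ} {E : Set Ω}
    (hE : IsCylinder X n E) : MeasurableSet E := by
  obtain ⟨C, hC, rfl⟩ := hE
  simp only [cylinder, Set.ofPred_forall]
  exact MeasurableSet.iInter fun i => MeasurableSet.iInter fun _ => hX i (hC i)

variable (hX : ∀ i, Measurable (X i)) {S : ℕ → Set α} (hS : ∀ i, MeasurableSet (S i))
include hX hS

lemma measurableSet_patternAt (L m : ℕ) : MeasurableSet (patternAt X S L m) := by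
  simpa using ((isCylinder_univ m).inter_patternAt hS L).measurableSet hX

/-- `E \ patternAt X S L n` is a finite disjoint union of cylinders of length `n + L`. -/
lemma le_on_diff_patternAt {ν₁ ν₂ : Measure Ω} {n L : ℕ}
    (hν : ∀ E, IsCylinder X (n + L) E → ν₁ E ≤ ν₂ E) {E : Set Ω} (hE : IsCylinder X n E) :
    ν₁ (E \ patternAt X S L n) ≤ ν₂ (E \ patternAt X S L n) := by
  induction L with
  | zero => simp [patternAt]
  | succ L ih =>
    have hlast := (hE.inter_patternAt hS L).inter_preimage (hS L).compl
    have hsplit : E \ patternAt X S (L + 1) n =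
        (E \ patternAt X S L n) ∪ (E ∩ patternAt X S L n ∩ X (n + L) ⁻¹' (S L)ᶜ) := by
      ext ω
      simp only [patternAt_succ, Set.mem_sdiff, Set.mem_union, Set.mem_inter_iff,
        Set.mem_preimage, Set.mem_compl_iff]
      tauto
    have hdisj : Disjoint (E \ patternAt X S L n) (E ∩ patternAt X S L n ∩ X (n + L) ⁻¹' (S L)ᶜ) :=
      Set.disjoint_left.2 fun ω h₁ h₂ => h₁.2 h₂.1.2
    rw [hsplit, measure_union hdisj (hlast.measurableSet hX),
      measure_union hdisj (hlast.measurableSet hX)]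
    exact add_le_add (ih fun E' hE' => hν E' (hE'.mono (by omega))) (hν _ hlast)

lemma measure_inter_forall_not_patternAt_le {μ : Measure Ω} [IsFiniteMeasure μ] {L : ℕ}
    {c : ℝ≥0∞} (hpat : ∀ n E, IsCylinder X (n + 1) E → c * μ E ≤ μ (E ∩ patternAt X S L (n + 1)))
    (N : ℕ) : ∀ n E, IsCylinder X (n + 1) E →
      μ (E ∩ {ω | ∀ j < N, ω ∉ patternAt X S L (n + 1 + L * j)}) ≤ (1 - c) ^ N * μ E := by
  induction N with
  | zero => simp
  | succ N ih =>
    intro n E hE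
    set T := {ω | ∀ j < N, ω ∉ patternAt X S L (n + L + 1 + L * j)}
    have hT : MeasurableSet T := by
      simp only [T, Set.ofPred_forall]
      exact .iInter fun j => .iInter fun _ => (measurableSet_patternAt hX hS L _).compl
    have hsplit : E ∩ {ω | ∀ j < N + 1, ω ∉ patternAt X S L (n + 1 + L * j)} =
        (E \ patternAt X S L (n + 1)) ∩ T := by
      have hidx : ∀ j, n + 1 + L * (j + 1) = n + L + 1 + L * j := fun j => by ring
      ext ω
      simp only [T, Set.mem_inter_iff, Set.mem_sdiff, Set.mem_ofPred_eq, Nat.forall_lt_succ_left,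
        mul_zero, add_zero, hidx, and_assoc]
    have hfail : μ (E \ patternAt X S L (n + 1)) ≤ (1 - c) * μ E := by
      rw [← Set.sdiff_self_inter, measure_sdiff_le_iff_le_add
        ((hE.inter_patternAt hS L).measurableSet hX).nullMeasurableSet Set.inter_subset_left
        (measure_ne_top _ _)]
      calc μ E ≤ (c + (1 - c)) * μ E := le_mul_of_one_le_left zero_le le_add_tsub
        _ ≤ μ (E ∩ patternAt X S L (n + 1)) + (1 - c) * μ E := by
          rw [add_mul]; exact add_le_add_left (hpat n E hE) _
    calc μ (E ∩ {ω | ∀ j < N + 1, ω ∉ patternAt X S L (n + 1 + L * j)})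
        = μ.restrict T (E \ patternAt X S L (n + 1)) := by rw [hsplit, Measure.restrict_apply' hT]
      _ ≤ ((1 - c) ^ N • μ) (E \ patternAt X S L (n + 1)) := by
        refine le_on_diff_patternAt hX hS (fun E' hE' => ?_) hE
        rw [Measure.restrict_apply' hT, Measure.smul_apply, smul_eq_mul]
        exact ih (n + L) E' (by rwa [Nat.add_right_comm])
      _ ≤ (1 - c) ^ (N + 1) * μ E := by
        rw [Measure.smul_apply, smul_eq_mul, pow_succ, mul_assoc]
        gcongr

theorem ae_frequently_patternAt {μ : Measure Ω} [IsProbabilityMeasure μ] {L : ℕ} {c : ℝ≥0∞}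
    (hc : c ≠ 0)
    (hpat : ∀ n E, IsCylinder X (n + 1) E → c * μ E ≤ μ (E ∩ patternAt X S L (n + 1))) :
    ∀ᵐ ω ∂μ, ∃ᶠ m in Filter.atTop, ω ∈ patternAt X S L m := by
  simp only [Filter.frequently_atTop]
  refine ae_all_iff.2 fun t => ae_iff.2 (nonpos_iff_eq_zero.1 (ge_of_tendsto'
    (ENNReal.tendsto_pow_atTop_nhds_zero_of_lt_one
      (ENNReal.sub_lt_self ENNReal.one_ne_top one_ne_zero hc)) fun N => ?_))
  calc μ {ω | ¬ ∃ m, t ≤ m ∧ ω ∈ patternAt X S L m}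
      ≤ μ (Set.univ ∩ {ω | ∀ j < N, ω ∉ patternAt X S L (t + 1 + L * j)}) :=
        measure_mono fun ω hω => ⟨trivial, fun j _ hj => hω ⟨_, by omega, hj⟩⟩
    _ ≤ (1 - c) ^ N * μ Set.univ :=
        measure_inter_forall_not_patternAt_le hX hS hpat N t _ (isCylinder_univ _)
    _ = (1 - c) ^ N := by rw [measure_univ, mul_one]

end Cylinder

section HiddenPaths

open Function

variable {Ω α : Type*}

def pathEvent (Y : ℕ → Ω → Bool) (X : ℕ → Ω → α) (n : ℕ) (z : ℕ → Bool) (C : ℕ → Set α) :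
    Set Ω :=
  {ω | ∀ i < n, Y i ω = z i ∧ X i ω ∈ C i}

def prefixExt {n : ℕ} (y : Fin n → Bool) (σ : ℕ → Bool) : ℕ → Bool :=
  fun i => if h : i < n then y ⟨i, h⟩ else σ (i - n)

lemma prefixExt_add {n : ℕ} (y : Fin n → Bool) (σ : ℕ → Bool) (i : ℕ) :
    prefixExt y σ (n + i) = σ i := by
  simp [prefixExt]

variable {Y : ℕ → Ω → Bool} {X : ℕ → Ω → α}

lemma iUnion_pathEvent_prefixExt (n : ℕ) (σ : ℕ → Bool) (C : ℕ → Set α) :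
    ⋃ y : Fin n → Bool, pathEvent Y X n (prefixExt y σ) C = cylinder X n C := by
  ext ω
  simp only [Set.mem_iUnion, pathEvent, cylinder, Set.mem_ofPred_eq]
  refine ⟨fun ⟨y, h⟩ i hi => (h i hi).2, fun h => ⟨fun i => Y i ω, fun i hi => ⟨?_, h i hi⟩⟩⟩
  simp [prefixExt, hi]

lemma pairwise_disjoint_pathEvent_prefixExt {n m : ℕ} (hnm : n ≤ m) (σ : ℕ → Bool)
    (C : ℕ → Set α) :
    Pairwise (Disjoint on fun y : Fin n → Bool => pathEvent Y X m (prefixExt y σ) C) := by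
  refine fun y y' hne => Set.disjoint_left.2 fun ω h h' => hne (funext fun i => ?_)
  have := (h i (by omega)).1.symm.trans (h' i (by omega)).1
  simpa [prefixExt] using this

variable [MeasurableSpace Ω] [MeasurableSpace α]

lemma measurableSet_pathEvent (hY : ∀ i, Measurable (Y i)) (hX : ∀ i, Measurable (X i))
    (n : ℕ) (z : ℕ → Bool) {C : ℕ → Set α} (hC : ∀ i, MeasurableSet (C i)) :
    MeasurableSet (pathEvent Y X n z C) := by
  simp only [pathEvent, Set.ofPred_forall]
  exact .iInter fun i => .iInter fun _ =>
    (hY i (measurableSet_singleton (z i))).inter (hX i (hC i))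

lemma measure_cylinder_eq_sum (μ : Measure Ω) (hY : ∀ i, Measurable (Y i))
    (hX : ∀ i, Measurable (X i)) (n : ℕ) (σ : ℕ → Bool) {C : ℕ → Set α}
    (hC : ∀ i, MeasurableSet (C i)) :
    μ (cylinder X n C) = ∑ y : Fin n → Bool, μ (pathEvent Y X n (prefixExt y σ) C) := by
  rw [← iUnion_pathEvent_prefixExt (Y := Y) n σ C, measure_iUnion
    (pairwise_disjoint_pathEvent_prefixExt le_rfl σ C)
    (fun y => measurableSet_pathEvent hY hX n _ hC), tsum_fintype]

end HiddenPaths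

section HMM

variable (P : HMMParams d)

noncomputable def HMMParams.minTrans : ℝ := min (min P.paa P.pab) (min P.pba P.pbb)

lemma minTrans_pos : 0 < P.minTrans :=
  lt_min (lt_min P.paa_pos P.pab_pos) (lt_min P.pba_pos P.pbb_pos)

lemma minTrans_le_transP (s t : Bool) : P.minTrans ≤ P.transP s t := by
  unfold HMMParams.minTrans HMMParams.transP
  cases s <;> cases t <;> simp

lemma transP_nonneg (s t : Bool) : 0 ≤ P.transP s t :=
  (minTrans_pos P).le.trans (minTrans_le_transP P s t)

lemma initP_nonneg (s : Bool) : 0 ≤ P.initP s := by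
  cases s
  exacts [P.pib_pos.le, P.pia_pos.le]

variable {P} {Ω : Type} [MeasurableSpace Ω] {μ : Measure Ω} {Y : ℕ → Ω → Bool}
  {X : ℕ → Ω → (Fin d → ℝ)}

lemma measure_pathEvent (hHMM : IsHMM P μ Y X) (n : ℕ) (z : ℕ → Bool)
    {C : ℕ → Set (Fin d → ℝ)} (hC : ∀ i, MeasurableSet (C i)) :
    μ (pathEvent Y X (n + 1) z C) =
      ENNReal.ofReal (P.initP (z 0) * ∏ i ∈ Finset.range n, P.transP (z i) (z (i + 1))) *
        ∏ i ∈ Finset.range (n + 1), P.emis (z i) (C i) := by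
  have h := hHMM.2.2.2 n (fun i => z i) (fun i => C i) (fun i => hC i)
  rw [← Fin.prod_univ_eq_prod_range (fun i => P.transP (z i) (z (i + 1))),
    ← Fin.prod_univ_eq_prod_range (fun i => P.emis (z i) (C i))]
  convert h using 2
  · ext ω
    simp [pathEvent, Fin.forall_iff]
  · simp

lemma measure_pathEvent_add (hHMM : IsHMM P μ Y X) (n L : ℕ) (z : ℕ → Bool)
    {C : ℕ → Set (Fin d → ℝ)} (hC : ∀ i, MeasurableSet (C i)) :
    μ (pathEvent Y X (n + 1 + L) z C) =
      μ (pathEvent Y X (n + 1) z C) *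
        ENNReal.ofReal (∏ i ∈ Finset.range L, P.transP (z (n + i)) (z (n + i + 1))) *
          ∏ i ∈ Finset.range L, P.emis (z (n + 1 + i)) (C (n + 1 + i)) := by
  rw [show n + 1 + L = n + L + 1 by omega, measure_pathEvent hHMM _ _ hC,
    measure_pathEvent hHMM _ _ hC, Finset.prod_range_add, show n + L + 1 = n + 1 + L by omega,
    Finset.prod_range_add]
  simp only [ENNReal.ofReal_mul (initP_nonneg P _),
    ENNReal.ofReal_mul (Finset.prod_nonneg fun _ _ => transP_nonneg P _ _),
    ENNReal.ofReal_prod_of_nonneg fun _ _ => transP_nonneg P _ _]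
  ring

lemma measure_preimage_eq_zero (hHMM : IsHMM P μ Y X) {A : Set (Fin d → ℝ)}
    (hA : MeasurableSet A) (hnull : ∀ s, P.emis s A = 0) (i : ℕ) : μ (X i ⁻¹' A) = 0 := by
  set C := Function.update (fun _ => Set.univ) i A
  have hC : ∀ j, MeasurableSet (C j) := fun j => by
    rcases eq_or_ne j i with rfl | h
    · simpa [C] using hA
    · simp [C, h]
  refine measure_mono_null (t := cylinder X (i + 1) C) (fun ω hω j hj => ?_) ?_
  · rcases eq_or_ne j i with rfl | h
    · simpa [C] using hω
    · simp [C, h]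
  rw [measure_cylinder_eq_sum μ hHMM.2.1 hHMM.2.2.1 _ (fun _ => true) hC]
  refine Finset.sum_eq_zero fun y _ => ?_
  rw [measure_pathEvent hHMM _ _ hC, Finset.prod_eq_zero (Finset.self_mem_range_succ i)
    (by simpa [C] using hnull _), mul_zero]

lemma ae_fa_pos_or_fb_pos (hHMM : IsHMM P μ Y X) :
    ∀ᵐ ω ∂μ, ∀ i, 0 < P.fa (X i ω) ∨ 0 < P.fb (X i ω) := by
  have hA : MeasurableSet {x | P.fa x ≤ 0 ∧ P.fb x ≤ 0} :=
    (measurableSet_le P.fa_meas measurable_const).inter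
      (measurableSet_le P.fb_meas measurable_const)
  refine ae_all_iff.2 fun i => ae_iff.2 ?_
  simpa [not_or, not_lt] using measure_preimage_eq_zero hHMM hA
    (fun s => emis_eq_zero_of_dens_nonpos P s hA fun x hx => by cases s; exacts [hx.2, hx.1]) i

/-- Whatever the hidden path before time `n + 1`, the hidden chain follows `σ` on the next `L`
steps with probability at least `minTrans ^ L`. -/
lemma le_measure_inter_patternAt (hHMM : IsHMM P μ Y X) (σ : ℕ → Bool)
    {S : ℕ → Set (Fin d → ℝ)} (hS : ∀ i, MeasurableSet (S i)) (L n : ℕ) {E : Set Ω}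
    (hE : IsCylinder X (n + 1) E) :
    ENNReal.ofReal P.minTrans ^ L * (∏ i ∈ Finset.range L, P.emis (σ i) (S i)) * μ E ≤
      μ (E ∩ patternAt X S L (n + 1)) := by
  obtain ⟨C, hC, rfl⟩ := hE
  set C' : ℕ → Set (Fin d → ℝ) := fun i => if i ≤ n then C i else S (i - (n + 1))
  have hC' : ∀ i, MeasurableSet (C' i) := fun i => by
    by_cases h : i ≤ n
    · simpa [C', h] using hC i
    · simpa [C', h] using hS _
  have hC'S : ∀ i, C' (n + 1 + i) = S i := fun i => by simp [C', show ¬ n + 1 + i ≤ n by omega]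
  have hpath : ∀ y : Fin (n + 1) → Bool, pathEvent Y X (n + 1) (prefixExt y σ) C' =
      pathEvent Y X (n + 1) (prefixExt y σ) C := fun y => by
    ext ω
    exact forall₂_congr fun i hi => by simp [C', Nat.le_of_lt_succ hi]
  have hterm : ∀ y : Fin (n + 1) → Bool,
      ENNReal.ofReal P.minTrans ^ L * (∏ i ∈ Finset.range L, P.emis (σ i) (S i)) *
        μ (pathEvent Y X (n + 1) (prefixExt y σ) C) ≤
      μ (pathEvent Y X (n + 1 + L) (prefixExt y σ) C') := fun y => by
    have htrans : ENNReal.ofReal P.minTrans ^ L ≤ ENNReal.ofReal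
        (∏ i ∈ Finset.range L, P.transP (prefixExt y σ (n + i)) (prefixExt y σ (n + i + 1))) := by
      rw [ENNReal.ofReal_prod_of_nonneg fun _ _ => transP_nonneg P _ _]
      simpa using Finset.pow_card_le_prod (Finset.range L) _ _ fun i _ =>
        ENNReal.ofReal_le_ofReal (minTrans_le_transP P _ _)
    rw [measure_pathEvent_add hHMM n L _ hC', hpath]
    simp only [prefixExt_add, hC'S]
    calc _ = μ (pathEvent Y X (n + 1) (prefixExt y σ) C) * ENNReal.ofReal P.minTrans ^ L *
          ∏ i ∈ Finset.range L, P.emis (σ i) (S i) := by ring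
      _ ≤ _ := by gcongr
  calc _ = ∑ y : Fin (n + 1) → Bool,
        ENNReal.ofReal P.minTrans ^ L * (∏ i ∈ Finset.range L, P.emis (σ i) (S i)) *
          μ (pathEvent Y X (n + 1) (prefixExt y σ) C) := by
        rw [measure_cylinder_eq_sum μ hHMM.2.1 hHMM.2.2.1 _ σ hC, Finset.mul_sum]
    _ ≤ ∑ y : Fin (n + 1) → Bool, μ (pathEvent Y X (n + 1 + L) (prefixExt y σ) C') :=
        Finset.sum_le_sum fun y _ => hterm y
    _ = μ (⋃ y : Fin (n + 1) → Bool, pathEvent Y X (n + 1 + L) (prefixExt y σ) C') := by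
        rw [measure_iUnion (pairwise_disjoint_pathEvent_prefixExt (by omega) σ C')
          (fun y => measurableSet_pathEvent hHMM.2.1 hHMM.2.2.1 _ _ hC'), tsum_fintype]
    _ ≤ μ (cylinder X (n + 1) C ∩ patternAt X S L (n + 1)) := by
        refine measure_mono (Set.iUnion_subset fun y ω hω => ⟨fun i hi => ?_, fun i hi => ?_⟩)
        · simpa [C', Nat.le_of_lt_succ hi] using (hω i (by omega)).2
        · simpa [hC'S] using (hω (n + 1 + i) (by omega)).2

end HMM

section Main

variable (P : HMMParams d) {Ω : Type} [MeasurableSpace Ω] {μ : Measure Ω} {Y : ℕ → Ω → Bool}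
  {X : ℕ → Ω → (Fin d → ℝ)}

theorem ae_infinite_strongANode (hHMM : IsHMM P μ Y X) (hc : P.paa < P.pba)
    (hab : P.pab ≤ P.pba) : ∀ᵐ ω ∂μ, {u : ℕ | StrongANode P (fun i => X i ω) u}.Infinite := by
  have := hHMM.1
  obtain ⟨r, hr, hfav⟩ := exists_emis_favSet_pos P
  obtain ⟨k, hk⟩ : ∃ k : ℕ, P.pba * P.pab < r ^ (2 * k + 1) * P.paa ^ 2 := by
    obtain ⟨k, hk⟩ := pow_unbounded_of_one_lt (P.pba * P.pab / P.paa ^ 2) hr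
    rw [div_lt_iff₀ (pow_pos P.paa_pos 2)] at hk
    exact ⟨k, hk.trans_le (mul_le_mul_of_nonneg_right
      (pow_le_pow_right₀ hr.le (by omega)) (sq_nonneg _))⟩
  have hS : ∀ i : ℕ, MeasurableSet (P.favSet r i.bodd) := fun i => measurableSet_favSet P r _
  have hpattern := ae_frequently_patternAt hHMM.2.2.1 hS (L := 2 * k + 2)
    (mul_ne_zero (pow_ne_zero _ (ENNReal.ofReal_pos.2 (minTrans_pos P)).ne')
      (Finset.prod_ne_zero_iff.2 fun i _ => (hfav _).ne'))
    (fun n E hE => le_measure_inter_patternAt hHMM Nat.bodd hS _ n hE)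
  filter_upwards [ae_fa_pos_or_fb_pos hHMM, hpattern] with ω hx hω
  rw [← Nat.frequently_atTop_iff_infinite, Filter.frequently_atTop]
  intro t
  obtain ⟨m, hm, hpat⟩ := Filter.frequently_atTop.1 hω t
  by_contra! hnone
  refine (pow_mul_paa_sq_le_of_forall_not_strongANode P hc hab hr hx (m := m) (k := k)
    (fun j hj => ?_) (fun j hj => ?_) (fun u hu _ => hnone u (hm.trans hu))).not_gt hk
  · have h := hpat (2 * j + 1) (by omega)
    simp only [HMMParams.favSet, HMMParams.dens, Nat.bodd_succ, Nat.bodd_mul, Nat.bodd_zero,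
      Bool.not_false, Bool.not_true, Bool.false_and, Bool.false_eq_true, ↓reduceIte, ← add_assoc,
      Set.mem_ofPred_eq] at h
    exact h.le
  · have h := hpat (2 * j) (by omega)
    simp only [HMMParams.favSet, HMMParams.dens, Nat.bodd_mul, Nat.bodd_succ, Nat.bodd_zero,
      Bool.not_false, Bool.not_true, Bool.false_and, ↓reduceIte, Bool.false_eq_true,
      Set.mem_ofPred_eq] at h
    exact h.le

end Main

section Swap

noncomputable def HMMParams.swap (P : HMMParams d) : HMMParams d where
  paa := P.pbb
  pab := P.pba
  pba := P.pab
  pbb := P.paa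
  pia := P.pib
  pib := P.pia
  fa := P.fb
  fb := P.fa
  lam := P.lam
  paa_pos := P.pbb_pos
  pab_pos := P.pba_pos
  pba_pos := P.pab_pos
  pbb_pos := P.paa_pos
  rowa := by linarith [P.rowb]
  rowb := by linarith [P.rowa]
  pia_pos := P.pib_pos
  pib_pos := P.pia_pos
  pi_sum := by linarith [P.pi_sum]
  pi_stat := by linear_combination (-P.pib) * P.rowb - P.pia * P.rowa - P.pi_stat
  fa_nonneg := P.fb_nonneg
  fb_nonneg := P.fa_nonneg
  fa_meas := P.fb_meas
  fb_meas := P.fa_meas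
  lam_sigmaFinite := P.lam_sigmaFinite
  fa_int := P.fb_int
  fb_int := P.fa_int
  emis_ne := by simpa only [ne_comm] using P.emis_ne

variable (P : HMMParams d)

lemma delta_swap (x : ℕ → Fin d → ℝ) (u : ℕ) :
    delta P.swap x u = ((delta P x u).2, (delta P x u).1) := by
  induction u with
  | zero => rfl
  | succ u ih =>
    rw [delta_succ, delta_succ, ih]
    exact Prod.ext (congrArg (· * _) (max_comm _ _)) (congrArg (· * _) (max_comm _ _))

lemma strongANode_swap_iff (x : ℕ → Fin d → ℝ) (u : ℕ) :
    StrongANode P.swap x u ↔ StrongBNode P x u := by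
  simp only [StrongANode, StrongBNode, delta_swap]
  exact and_comm

lemma isHMM_swap {Ω : Type} [MeasurableSpace Ω] {μ : Measure Ω} {Y : ℕ → Ω → Bool}
    {X : ℕ → Ω → (Fin d → ℝ)} (hHMM : IsHMM P μ Y X) :
    IsHMM P.swap μ (fun i ω => !Y i ω) X := by
  obtain ⟨hprob, hY, hX, hfd⟩ := hHMM
  have hnot : Measurable Bool.not := measurable_from_top
  refine ⟨hprob, fun i => hnot.comp (hY i), hX, fun n y A hA => ?_⟩
  have hinit : ∀ s, P.swap.initP s = P.initP (!s) := fun s => by cases s <;> rfl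
  have htrans : ∀ s t, P.swap.transP s t = P.transP (!s) (!t) := fun s t => by
    cases s <;> cases t <;> rfl
  have hemis : ∀ s, P.swap.emis s = P.emis (!s) := fun s => by cases s <;> rfl
  simp only [Bool.not_eq_eq_eq_not, hfd n (fun i => !y i) A hA, hinit, htrans, hemis]

end Swap

/-- **Theorem 2 (case 2).** Suppose `p_aa < p_ba`. If `p_ba ≥ p_ab`, then almost every
realization has infinitely many strong `a`-nodes; symmetrically, if `p_ab ≥ p_ba`,
infinitely many strong `b`-nodes. -/
theorem theorem2_case2 {d : ℕ} (P : HMMParams d) {Ω : Type} [MeasurableSpace Ω]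
    (μ : Measure Ω) (Y : ℕ → Ω → Bool) (X : ℕ → Ω → (Fin d → ℝ))
    (hHMM : IsHMM P μ Y X) (hcase : P.paa < P.pba) :
    (P.pab ≤ P.pba →
      ∀ᵐ ω ∂μ, {u : ℕ | StrongANode P (fun i => X i ω) u}.Infinite) ∧
    (P.pba ≤ P.pab →
      ∀ᵐ ω ∂μ, {u : ℕ | StrongBNode P (fun i => X i ω) u}.Infinite) := by
  refine ⟨ae_infinite_strongANode P hHMM hcase, fun hab => ?_⟩
  have hcase' : P.swap.paa < P.swap.pba := by
    change P.pbb < P.pab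
    linarith [P.rowa, P.rowb]
  filter_upwards [ae_infinite_strongANode P.swap (isHMM_swap P hHMM) hcase' hab] with ω hω
  simpa only [strongANode_swap_iff] using hω
end TwoStateHMM
end

section
/- Theorem (Theorem 3, case 3, the mixture model). Suppose p_aa = p_ba (equivalently p_bb = p_ab), so that π_a = p_aa and π_b = p_bb and the observations X_1, X_2, … are i.i.d. with density π_a f_a + π_b f_b. If π_a ≥ π_b, then almost surely the set {u ≥ 1 : X_u is a strong a-node of (X_1,…,X_u)} is infinite; if π_b ≥ π_a, then almost surely there are infinitely many strong b-nodes. -/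
open MeasureTheory

namespace TwoStateHMM

variable {d : ℕ}

/-!
When `p_aa = p_ba`, both rows of the transition matrix equal `(π_a, π_b)`. The Viterbi
recursion then forgets the past up to a positive factor: `δ_u` is a positive multiple of
`(π_a f_a(x_u), π_b f_b(x_u))` as long as no observation is a common zero of `f_a` and `f_b`,
so `x_u` is a strong `a`-node iff `π_b f_b(x_u) < π_a f_a(x_u)`. Likewise the observations
are i.i.d. with the mixture law `π_a P_a + π_b P_b`. If `π_a ≥ π_b`, this law charges
`{π_b f_b < π_a f_a}`: otherwise `π_a f_a ≤ π_b f_b ≤ π_a f_b` a.e., and since both densities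
integrate to one, `f_a = f_b` a.e. The second Borel–Cantelli lemma finishes the proof.
-/

lemma measure_setOf_mul_lt_mul_ne_zero {α : Type*} [MeasurableSpace α] {μ : Measure α}
    {f g : α → ℝ} (hf : Integrable f μ) (hg : Integrable g μ) (hg0 : 0 ≤ᵐ[μ] g)
    (hfg : ∫ x, f x ∂μ = ∫ x, g x ∂μ) (hne : ¬ f =ᵐ[μ] g) {c₁ c₂ : ℝ} (hc₁ : 0 < c₁)
    (hc : c₂ ≤ c₁) : μ {x | c₂ * g x < c₁ * f x} ≠ 0 := by
  intro h0
  have hle : f ≤ᵐ[μ] g := by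
    filter_upwards [measure_eq_zero_iff_ae_notMem.1 h0, hg0] with x hx hgx
    rw [not_lt] at hx
    exact le_of_mul_le_mul_left (hx.trans (mul_le_mul_of_nonneg_right hc hgx)) hc₁
  exact hne ((integral_eq_iff_of_ae_le hf hg hle).1 hfg)

namespace HMMParams

variable (P : HMMParams d)

lemma pia_eq_paa (hcase : P.paa = P.pba) : P.pia = P.paa := by
  linear_combination P.pi_stat + P.paa * P.pi_sum - P.pib * hcase

lemma pib_eq_pbb (hcase : P.paa = P.pba) : P.pib = P.pbb := by
  linear_combination P.pi_sum - P.pia_eq_paa hcase - P.rowb - hcase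

lemma pab_eq_pbb (hcase : P.paa = P.pba) : P.pab = P.pbb := by
  linear_combination P.rowa - P.rowb - hcase

lemma transP_eq_initP (hcase : P.paa = P.pba) (s t : Bool) : P.transP s t = P.initP t := by
  cases s <;> cases t <;>
    simp [HMMParams.transP, HMMParams.initP, hcase, P.pia_eq_paa hcase, P.pib_eq_pbb hcase,
      P.pab_eq_pbb hcase]

lemma initP_pos (s : Bool) : 0 < P.initP s := by
  cases s
  exacts [P.pib_pos, P.pia_pos]

lemma dens_nonneg (s : Bool) (x : Fin d → ℝ) : 0 ≤ P.dens s x := by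
  cases s
  exacts [P.fb_nonneg x, P.fa_nonneg x]

lemma measurable_dens (s : Bool) : Measurable (P.dens s) := by
  cases s
  exacts [P.fb_meas, P.fa_meas]

lemma integral_dens (s : Bool) : ∫ x, P.dens s x ∂P.lam = 1 := by
  cases s
  exacts [P.fb_int, P.fa_int]

lemma integrable_dens (s : Bool) : Integrable (P.dens s) P.lam :=
  Integrable.of_integral_ne_zero (by rw [integral_dens]; exact one_ne_zero)

lemma not_dens_ae_eq_dens_not (s : Bool) : ¬ P.dens s =ᵐ[P.lam] P.dens (!s) := by
  have hne : P.lam {x | P.fa x ≠ P.fb x} ≠ 0 := P.emis_ne.ne'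
  cases s
  · simp_rw [ne_comm (a := P.fa _)] at hne
    exact fun h => hne (ae_iff.1 h)
  · exact fun h => hne (ae_iff.1 h)

lemma emis_eq_zero_iff (s : Bool) (A : Set (Fin d → ℝ)) :
    P.emis s A = 0 ↔ P.lam ({x | 0 < P.dens s x} ∩ A) = 0 := by
  simp only [emis, withDensity_apply_eq_zero ((P.measurable_dens s).ennreal_ofReal), ne_eq,
    ENNReal.ofReal_eq_zero, not_le]

lemma emis_univ (s : Bool) : P.emis s Set.univ = 1 := by
  rw [emis, withDensity_apply _ MeasurableSet.univ, setLIntegral_univ,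
    ← ofReal_integral_eq_lintegral_ofReal (P.integrable_dens s)
      (ae_of_all _ (P.dens_nonneg s)), P.integral_dens, ENNReal.ofReal_one]

noncomputable def mixture : Measure (Fin d → ℝ) :=
  ∑ s : Bool, ENNReal.ofReal (P.initP s) • P.emis s

lemma mixture_apply (A : Set (Fin d → ℝ)) :
    P.mixture A = ∑ s : Bool, ENNReal.ofReal (P.initP s) * P.emis s A := by
  simp [mixture]

lemma mixture_univ : P.mixture Set.univ = 1 := by
  rw [mixture_apply, Fintype.sum_bool]
  simp only [emis_univ, mul_one, initP, if_true, Bool.false_eq_true, if_false]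
  rw [← ENNReal.ofReal_add P.pia_pos.le P.pib_pos.le, P.pi_sum, ENNReal.ofReal_one]

lemma mixture_setOf_lt_ne_zero (s : Bool) (h : P.initP (!s) ≤ P.initP s) :
    P.mixture {x | P.initP (!s) * P.dens (!s) x < P.initP s * P.dens s x} ≠ 0 := by
  set E := {x | P.initP (!s) * P.dens (!s) x < P.initP s * P.dens s x}
  have hE : P.lam E ≠ 0 :=
    measure_setOf_mul_lt_mul_ne_zero (P.integrable_dens s) (P.integrable_dens !s)
      (ae_of_all _ (P.dens_nonneg !s)) (by rw [integral_dens, integral_dens])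
      (P.not_dens_ae_eq_dens_not s) (P.initP_pos s) h
  have hpos : {x | 0 < P.dens s x} ∩ E = E := by
    refine Set.inter_eq_right.2 fun x hx => pos_of_mul_pos_right ?_ (P.initP_pos s).le
    exact lt_of_le_of_lt (mul_nonneg (P.initP_pos _).le (P.dens_nonneg _ x)) hx
  rw [mixture_apply, Ne, Finset.sum_eq_zero_iff]
  intro h0
  rcases mul_eq_zero.1 (h0 s (Finset.mem_univ s)) with hinit | hemis
  · exact (ENNReal.ofReal_pos.2 (P.initP_pos s)).ne' hinit
  · exact hE (by rwa [emis_eq_zero_iff, hpos] at hemis)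

end HMMParams

section Viterbi

variable (P : HMMParams d) (x : ℕ → (Fin d → ℝ))

lemma delta_succ_eq_smul (hcase : P.paa = P.pba) (u : ℕ) :
    delta P x (u + 1) = max (delta P x u).1 (delta P x u).2 •
      (P.pia * P.fa (x (u + 1)), P.pib * P.fb (x (u + 1))) := by
  rw [delta, ← hcase, P.pab_eq_pbb hcase, ← max_mul_of_nonneg _ _ P.paa_pos.le,
    ← max_mul_of_nonneg _ _ P.pbb_pos.le, P.pia_eq_paa hcase, P.pib_eq_pbb hcase]
  ext <;> simp only [Prod.smul_mk, smul_eq_mul] <;> ring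

lemma delta_eq_smul (hcase : P.paa = P.pba) (hx : ∀ v, 0 < P.fa (x v) ∨ 0 < P.fb (x v))
    (u : ℕ) : ∃ c : ℝ, 0 < c ∧ delta P x u = c • (P.pia * P.fa (x u), P.pib * P.fb (x u)) := by
  induction u with
  | zero => exact ⟨1, one_pos, by simp [delta]⟩
  | succ u ih =>
    obtain ⟨c, hc, hδ⟩ := ih
    refine ⟨_, ?_, delta_succ_eq_smul P x hcase u⟩
    rw [hδ, lt_max_iff]
    rcases hx u with ha | hb
    · exact Or.inl (mul_pos hc (mul_pos P.pia_pos ha))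
    · exact Or.inr (mul_pos hc (mul_pos P.pib_pos hb))

lemma strongANode_iff_snd_lt_fst (hcase : P.paa = P.pba) (u : ℕ) :
    StrongANode P x u ↔ (delta P x u).2 < (delta P x u).1 := by
  rw [StrongANode, ← hcase, P.pab_eq_pbb hcase, mul_lt_mul_iff_left₀ P.paa_pos,
    mul_lt_mul_iff_left₀ P.pbb_pos, and_self]

lemma strongBNode_iff_fst_lt_snd (hcase : P.paa = P.pba) (u : ℕ) :
    StrongBNode P x u ↔ (delta P x u).1 < (delta P x u).2 := by
  rw [StrongBNode, ← hcase, P.pab_eq_pbb hcase, mul_lt_mul_iff_left₀ P.paa_pos,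
    mul_lt_mul_iff_left₀ P.pbb_pos, and_self]

lemma strongANode_iff (hcase : P.paa = P.pba) (hx : ∀ v, 0 < P.fa (x v) ∨ 0 < P.fb (x v))
    (u : ℕ) : StrongANode P x u ↔ P.pib * P.fb (x u) < P.pia * P.fa (x u) := by
  obtain ⟨c, hc, hδ⟩ := delta_eq_smul P x hcase hx u
  rw [strongANode_iff_snd_lt_fst P x hcase, hδ, Prod.smul_fst, Prod.smul_snd, smul_eq_mul,
    smul_eq_mul, mul_lt_mul_iff_right₀ hc]

lemma strongBNode_iff (hcase : P.paa = P.pba) (hx : ∀ v, 0 < P.fa (x v) ∨ 0 < P.fb (x v))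
    (u : ℕ) : StrongBNode P x u ↔ P.pia * P.fa (x u) < P.pib * P.fb (x u) := by
  obtain ⟨c, hc, hδ⟩ := delta_eq_smul P x hcase hx u
  rw [strongBNode_iff_fst_lt_snd P x hcase, hδ, Prod.smul_fst, Prod.smul_snd, smul_eq_mul,
    smul_eq_mul, mul_lt_mul_iff_right₀ hc]

end Viterbi

section Observations

open ProbabilityTheory Filter

variable {P : HMMParams d} {Ω : Type} [MeasurableSpace Ω] {μ : Measure Ω}
  {Y : ℕ → Ω → Bool} {X : ℕ → Ω → (Fin d → ℝ)}

lemma IsHMM.measurable (hHMM : IsHMM P μ Y X) (u : ℕ) : Measurable (X u) :=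
  hHMM.2.2.1 u

lemma IsHMM.measure_forall_mem_eq_prod (hHMM : IsHMM P μ Y X) (hcase : P.paa = P.pba) (n : ℕ)
    {A : Fin (n + 1) → Set (Fin d → ℝ)} (hA : ∀ i, MeasurableSet (A i)) :
    μ {ω | ∀ i : Fin (n + 1), X i ω ∈ A i} = ∏ i, P.mixture (A i) := by
  obtain ⟨-, hY, hX, hfdd⟩ := hHMM
  let E : (Fin (n + 1) → Bool) → Set Ω := fun y =>
    {ω | ∀ i : Fin (n + 1), Y i ω = y i ∧ X i ω ∈ A i}
  have hE : ∀ y, μ (E y) = ∏ i, ENNReal.ofReal (P.initP (y i)) * P.emis (y i) (A i) := by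
    intro y
    simp_rw [E, hfdd n y A hA, P.transP_eq_initP hcase,
      ← Fin.prod_univ_succ (fun i => P.initP (y i))]
    rw [ENNReal.ofReal_prod_of_nonneg (fun i _ => (P.initP_pos _).le), Finset.prod_mul_distrib]
  have hunion : {ω | ∀ i : Fin (n + 1), X i ω ∈ A i} = ⋃ y, E y := by
    ext ω
    simp only [E, Set.mem_ofPred_eq, Set.mem_iUnion]
    exact ⟨fun h => ⟨fun i => Y i ω, fun i => ⟨rfl, h i⟩⟩, fun ⟨y, hy⟩ i => (hy i).2⟩
  have hdisj : Pairwise (Function.onFun Disjoint E) := fun y y' hne =>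
    Set.disjoint_left.2 fun ω h h' => hne (funext fun i => (h i).1.symm.trans (h' i).1)
  have hmeas : ∀ y, MeasurableSet (E y) := fun y => by
    simp only [E, Set.ofPred_forall, Set.ofPred_and]
    exact .iInter fun i => ((hY i) (measurableSet_singleton _)).inter ((hX i) (hA i))
  simp_rw [hunion, measure_iUnion hdisj hmeas, tsum_fintype, hE, P.mixture_apply,
    Fintype.prod_sum]

lemma IsHMM.measure_biInter_preimage_eq_prod (hHMM : IsHMM P μ Y X) (hcase : P.paa = P.pba)
    (S : Finset ℕ) {A : ℕ → Set (Fin d → ℝ)} (hA : ∀ i, MeasurableSet (A i)) :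
    μ (⋂ i ∈ S, X i ⁻¹' A i) = ∏ i ∈ S, P.mixture (A i) := by
  classical
  set n := S.sup id
  have hS : ∀ i ∈ S, i < n + 1 := fun i hi => Nat.lt_succ_of_le (Finset.le_sup (f := id) hi)
  have hset : ⋂ i ∈ S, X i ⁻¹' A i =
      {ω | ∀ i : Fin (n + 1), X i ω ∈ if (i : ℕ) ∈ S then A i else Set.univ} := by
    ext ω
    simp only [Set.mem_iInter, Set.mem_preimage, Set.mem_ofPred_eq]
    refine ⟨fun h i => ?_, fun h i hi => by simpa [hi] using h ⟨i, hS i hi⟩⟩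
    split_ifs with hi
    exacts [h i hi, trivial]
  rw [hset, hHMM.measure_forall_mem_eq_prod hcase n fun i => by split_ifs; exacts [hA i, .univ]]
  simp_rw [apply_ite P.mixture, P.mixture_univ]
  rw [Fin.prod_univ_eq_prod_range (fun i => if i ∈ S then P.mixture (A i) else 1),
    Finset.prod_ite_mem, Finset.inter_eq_right.2 fun i hi => Finset.mem_range.2 (hS i hi)]

lemma IsHMM.measure_preimage (hHMM : IsHMM P μ Y X) (hcase : P.paa = P.pba) (u : ℕ)
    {A : Set (Fin d → ℝ)} (hA : MeasurableSet A) : μ (X u ⁻¹' A) = P.mixture A := by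
  simpa using hHMM.measure_biInter_preimage_eq_prod hcase {u} fun _ => hA

lemma IsHMM.iIndepSet_preimage (hHMM : IsHMM P μ Y X) (hcase : P.paa = P.pba)
    {A : Set (Fin d → ℝ)} (hA : MeasurableSet A) : iIndepSet (fun u => X u ⁻¹' A) μ := by
  refine (iIndepSet_iff_meas_biInter fun u => hHMM.measurable u hA).2 fun S => ?_
  rw [hHMM.measure_biInter_preimage_eq_prod hcase S fun _ => hA]
  exact Finset.prod_congr rfl fun u _ => (hHMM.measure_preimage hcase u hA).symm

lemma IsHMM.ae_infinite_setOf_mem (hHMM : IsHMM P μ Y X) (hcase : P.paa = P.pba)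
    {A : Set (Fin d → ℝ)} (hA : MeasurableSet A) (hA0 : P.mixture A ≠ 0) :
    ∀ᵐ ω ∂μ, {u | X u ω ∈ A}.Infinite := by
  have := hHMM.1
  have hsum : ∑' u, μ (X u ⁻¹' A) = ⊤ := by
    simp_rw [hHMM.measure_preimage hcase _ hA]
    exact ENNReal.tsum_const_eq_top_of_ne_zero hA0
  have hmeas : ∀ u, MeasurableSet (X u ⁻¹' A) := fun u => hHMM.measurable u hA
  have hlimsup := measure_limsup_eq_one hmeas (hHMM.iIndepSet_preimage hcase hA) hsum
  have hae : ∀ᵐ ω ∂μ, ω ∈ limsup (fun u => X u ⁻¹' A) atTop := by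
    rw [ae_mem_iff_measure_eq (MeasurableSet.measurableSet_limsup hmeas).nullMeasurableSet,
      hlimsup, measure_univ]
  filter_upwards [hae] with ω hω
  exact Nat.frequently_atTop_iff_infinite.1 (mem_limsup_iff_frequently_mem.1 hω)

lemma IsHMM.ae_forall_dens_pos (hHMM : IsHMM P μ Y X) (hcase : P.paa = P.pba) :
    ∀ᵐ ω ∂μ, ∀ u, 0 < P.fa (X u ω) ∨ 0 < P.fb (X u ω) := by
  set Z := {x | ¬ (0 < P.fa x ∨ 0 < P.fb x)}
  have hZ : MeasurableSet Z :=
    ((measurableSet_lt measurable_const P.fa_meas).union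
      (measurableSet_lt measurable_const P.fb_meas)).compl
  have hZ0 : P.mixture Z = 0 := by
    refine P.mixture_apply Z ▸ Finset.sum_eq_zero fun s _ => ?_
    have hempty : {x | 0 < P.dens s x} ∩ Z = ∅ := by
      refine Set.eq_empty_iff_forall_notMem.2 ?_
      rintro x ⟨hpos, hx⟩
      cases s
      exacts [hx (Or.inr hpos), hx (Or.inl hpos)]
    rw [(P.emis_eq_zero_iff s Z).2 (hempty ▸ measure_empty), mul_zero]
  exact ae_all_iff.2 fun u => ae_iff.2 ((hHMM.measure_preimage hcase u hZ).trans hZ0)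

end Observations

/-- **Theorem 3 (case 3, the mixture model).** Suppose `p_aa = p_ba`. If `π_a ≥ π_b`, then
almost surely there are infinitely many strong `a`-nodes; if `π_b ≥ π_a`, almost surely
infinitely many strong `b`-nodes. -/
theorem theorem3_case3 {d : ℕ} (P : HMMParams d) {Ω : Type} [MeasurableSpace Ω]
    (μ : Measure Ω) (Y : ℕ → Ω → Bool) (X : ℕ → Ω → (Fin d → ℝ))
    (hHMM : IsHMM P μ Y X) (hcase : P.paa = P.pba) :
    (P.pib ≤ P.pia →
      ∀ᵐ ω ∂μ, {u : ℕ | StrongANode P (fun i => X i ω) u}.Infinite) ∧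
    (P.pia ≤ P.pib →
      ∀ᵐ ω ∂μ, {u : ℕ | StrongBNode P (fun i => X i ω) u}.Infinite) := by
  have hdens := hHMM.ae_forall_dens_pos hcase
  refine ⟨fun h => ?_, fun h => ?_⟩
  · have hA : P.mixture {x | P.pib * P.fb x < P.pia * P.fa x} ≠ 0 :=
      P.mixture_setOf_lt_ne_zero true h
    filter_upwards [hdens, hHMM.ae_infinite_setOf_mem hcase
      (measurableSet_lt (P.fb_meas.const_mul _) (P.fa_meas.const_mul _)) hA] with ω hω hinf
    simpa only [strongANode_iff P _ hcase hω] using hinf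
  · have hA : P.mixture {x | P.pia * P.fa x < P.pib * P.fb x} ≠ 0 :=
      P.mixture_setOf_lt_ne_zero false h
    filter_upwards [hdens, hHMM.ae_infinite_setOf_mem hcase
      (measurableSet_lt (P.fa_meas.const_mul _) (P.fb_meas.const_mul _)) hA] with ω hω hinf
    simpa only [strongBNode_iff P _ hcase hω] using hinf
end TwoStateHMM
end

section
/- Lemma (Lemma 2). Any two-state HMM satisfies at least one of the following two conditions: P_a({x : f_a(x)·max(p_aa, p_ba) > f_b(x)·max(p_bb, p_ab)}) > 0, or P_b({x : f_b(x)·max(p_bb, p_ab) > f_a(x)·max(p_aa, p_ba)}) > 0. -/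
open MeasureTheory

namespace TwoStateHMM

variable {d : ℕ}

/-! If both probabilities vanish, then `λ`-a.e. `f_a · max(p_aa, p_ba) = f_b · max(p_bb, p_ab)`
(on each strict-inequality set the dominating density is positive, so `P_a`- or `P_b`-null
means `λ`-null). Integrating shows the two maxima agree, hence `f_a = f_b` `λ`-a.e.,
contradicting that the emission distributions differ. -/

section

variable {α : Type*} [MeasurableSpace α] {μ : Measure α}

theorem measure_eq_zero_of_withDensity_ofReal_eq_zero {f : α → ℝ} (hf : AEMeasurable f μ)
    {s : Set α} (hpos : ∀ x ∈ s, 0 < f x)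
    (h : μ.withDensity (fun x => ENNReal.ofReal (f x)) s = 0) : μ s = 0 := by
  rw [withDensity_apply_eq_zero' hf.ennreal_ofReal] at h
  refine measure_mono_null (fun x hx => ?_) h
  exact ⟨by simpa using hpos x hx, hx⟩

theorem ae_eq_of_measure_setOf_lt_eq_zero {f g : α → ℝ} (hgf : μ {x | g x < f x} = 0)
    (hfg : μ {x | f x < g x} = 0) : f =ᵐ[μ] g := by
  refine Filter.EventuallyLE.antisymm ?_ ?_ <;> rw [Filter.EventuallyLE, ae_iff] <;>
    simpa only [not_le]

theorem ae_eq_of_mul_const_ae_eq_of_integral_eq_one {f g : α → ℝ} {c c' : ℝ} (hc' : c' ≠ 0)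
    (hf : ∫ x, f x ∂μ = 1) (hg : ∫ x, g x ∂μ = 1) (h : ∀ᵐ x ∂μ, f x * c = g x * c') :
    f =ᵐ[μ] g := by
  have hcc' : c = c' := by
    simpa only [integral_mul_const, hf, hg, one_mul] using integral_congr_ae h
  filter_upwards [h] with x hx
  exact mul_right_cancel₀ hc' (hcc' ▸ hx)

end

/-- **Lemma 2.** Any two-state HMM satisfies at least one of the conditions
`P_a({f_a·max(p_aa,p_ba) > f_b·max(p_bb,p_ab)}) > 0` and
`P_b({f_b·max(p_bb,p_ab) > f_a·max(p_aa,p_ba)}) > 0`. -/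
theorem lemma2_ab_or_ba {d : ℕ} (P : HMMParams d) :
    0 < P.emis true {x | P.fb x * max P.pbb P.pab < P.fa x * max P.paa P.pba} ∨
    0 < P.emis false {x | P.fa x * max P.paa P.pba < P.fb x * max P.pbb P.pab} := by
  by_contra! ⟨ha, hb⟩
  have hMa : 0 < max P.paa P.pba := lt_max_of_lt_left P.paa_pos
  have hMb : 0 < max P.pbb P.pab := lt_max_of_lt_left P.pbb_pos
  have hSa := measure_eq_zero_of_withDensity_ofReal_eq_zero P.fa_meas.aemeasurable
    (fun x hx => pos_of_mul_pos_left ((mul_nonneg (P.fb_nonneg x) hMb.le).trans_lt hx) hMa.le)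
    (nonpos_iff_eq_zero.mp ha)
  have hSb := measure_eq_zero_of_withDensity_ofReal_eq_zero P.fb_meas.aemeasurable
    (fun x hx => pos_of_mul_pos_left ((mul_nonneg (P.fa_nonneg x) hMa.le).trans_lt hx) hMb.le)
    (nonpos_iff_eq_zero.mp hb)
  have hfab : P.fa =ᵐ[P.lam] P.fb :=
    ae_eq_of_mul_const_ae_eq_of_integral_eq_one hMb.ne' P.fa_int P.fb_int
      (ae_eq_of_measure_setOf_lt_eq_zero hSa hSb)
  exact P.emis_ne.ne' (ae_iff.mp hfab)
end TwoStateHMM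
end
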